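/- arXiv:2309.03163 — 2 statements merged into one kernel-verified Lean document; each statement's English description precedes it below -/
import Mathlib

section
/- (Large blocks probability of exceedances in two adjacent blocks, MMA(1).) If in addition r_n^2 w_n → ∞, then lim_{n→∞} P(A_1 ∩ A_2)/(r_n^2 w_n^2) = θ^2, where θ = (max(c_0,c_1))^α / (c_0^α + c_1^α). -/
/-!
For the MMA(1) process, `X_i ≤ T` for all `lo ≤ i ≤ lo + L` says exactly that `c₀ ξ_lo ≤ T`,
`c₁ ξ_{lo+L+1} ≤ T` and `max c₀ c₁ · ξ_k ≤ T` for the `L` indices in between, so by independence a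
block of `L + 1` consecutive `X_i` stays below `T` with probability `F(T/c₀) F(T/c₁) F(T/m)^L`,
where `F` is the distribution function of `ξ₀` and `m = max c₀ c₁`. Inclusion–exclusion then gives
the exact identity `P(A₁ ∩ A₂) (1 - Q) = (w - Q) + (1 - w) (1 - (1 - Q)^r)²` with `Q = P(ξ₀ > u/m)`.
As `rQ ≤ rw → 0`, `1 - (1 - Q)^r ~ rQ`; regular variation gives `Q/w → θ`; and `r²w → ∞` makes
the term `(w - Q)/(r²w²)` negligible.
-/

open MeasureTheory Filter ProbabilityTheory Finset Topology

lemma one_sub_pow_mul_one_add_mul_le_one {q : ℝ} (hq0 : 0 ≤ q) (hq1 : q ≤ 1) (R : ℕ) :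
    (1 - q) ^ R * (1 + R * q) ≤ 1 :=
  calc (1 - q) ^ R * (1 + R * q) ≤ (1 - q) ^ R * (1 + q) ^ R :=
        mul_le_mul_of_nonneg_left (one_add_mul_le_pow (by linarith) R)
          (pow_nonneg (sub_nonneg.2 hq1) R)
    _ = (1 - q ^ 2) ^ R := by rw [← mul_pow]; ring
    _ ≤ 1 := pow_le_one₀ (by nlinarith) (by nlinarith)

lemma tendsto_one_sub_one_sub_pow_div {ι : Type*} {l : Filter ι} {q : ι → ℝ} {R : ι → ℕ}
    (hR : ∀ i, 0 < R i) (hq : ∀ i, 0 < q i) (h : Tendsto (fun i => R i * q i) l (𝓝 0)) :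
    Tendsto (fun i => (1 - (1 - q i) ^ R i) / (R i * q i)) l (𝓝 1) := by
  have hlower : Tendsto (fun i => 1 / (1 + R i * q i)) l (𝓝 1) := by
    simpa using (tendsto_const_nhds.add h).inv₀ (by norm_num : (1 : ℝ) + 0 ≠ 0)
  refine tendsto_of_tendsto_of_tendsto_of_le_of_le' hlower tendsto_const_nhds ?_ ?_
  all_goals
    filter_upwards [h.eventually (gt_mem_nhds one_pos)] with i hi
    have hRq : 0 < (R i : ℝ) * q i := mul_pos (Nat.cast_pos.2 (hR i)) (hq i)
    have hq1 : q i ≤ 1 := by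
      have : (1 : ℝ) ≤ R i := Nat.one_le_cast.2 (hR i)
      nlinarith [hq i]
  · rw [div_le_div_iff₀ (by positivity) hRq]
    nlinarith [one_sub_pow_mul_one_add_mul_le_one (hq i).le hq1 (R i)]
  · rw [div_le_one hRq]
    nlinarith [one_add_mul_sub_le_pow (a := 1 - q i) (by linarith) (R i)]

lemma tendsto_div_sq_of_mul_one_sub_eq {p w Q : ℕ → ℝ} {r : ℕ → ℕ} {θ : ℝ}
    (hr : ∀ n, 0 < r n) (hQ : ∀ n, 0 < Q n) (hQw : ∀ n, Q n ≤ w n)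
    (hrw : Tendsto (fun n => (r n : ℝ) * w n) atTop (𝓝 0))
    (hlarge : Tendsto (fun n => (r n : ℝ) ^ 2 * w n) atTop atTop)
    (hθ : Tendsto (fun n => Q n / w n) atTop (𝓝 θ))
    (hp : ∀ n, p n * (1 - Q n) = w n - Q n + (1 - w n) * (1 - (1 - Q n) ^ r n) ^ 2) :
    Tendsto (fun n => p n / ((r n : ℝ) ^ 2 * w n ^ 2)) atTop (𝓝 (θ ^ 2)) := by
  have hw_le : ∀ n, w n ≤ r n * w n := fun n =>
    le_mul_of_one_le_left ((hQ n).le.trans (hQw n)) (Nat.one_le_cast.2 (hr n))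
  have hw : Tendsto w atTop (𝓝 0) :=
    squeeze_zero (fun n => (hQ n).le.trans (hQw n)) hw_le hrw
  have hrQ : Tendsto (fun n => (r n : ℝ) * Q n) atTop (𝓝 0) :=
    squeeze_zero (fun n => by positivity [(hQ n).le])
      (fun n => mul_le_mul_of_nonneg_left (hQw n) (Nat.cast_nonneg _)) hrw
  have hQ0 : Tendsto Q atTop (𝓝 0) := squeeze_zero (fun n => (hQ n).le) hQw hw
  have hlim : Tendsto (fun n => ((1 - w n) * ((1 - (1 - Q n) ^ r n) / (r n * Q n) * (Q n / w n)) ^ 2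
      + (1 - Q n / w n) * ((r n : ℝ) ^ 2 * w n)⁻¹) / (1 - Q n)) atTop
      (𝓝 (((1 - 0) * (1 * θ) ^ 2 + (1 - θ) * 0) / (1 - 0))) :=
    (((tendsto_const_nhds.sub hw).mul
      (((tendsto_one_sub_one_sub_pow_div hr hQ hrQ).mul hθ).pow 2)).add
      ((tendsto_const_nhds.sub hθ).mul hlarge.inv_tendsto_atTop)).div
      (tendsto_const_nhds.sub hQ0) (by norm_num)
  rw [show ((1 - 0) * (1 * θ) ^ 2 + (1 - θ) * 0) / (1 - 0) = θ ^ 2 by ring] at hlim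
  refine hlim.congr' ?_
  filter_upwards [hQ0.eventually (gt_mem_nhds one_pos)] with n hn
  have hr0 : (r n : ℝ) ≠ 0 := Nat.cast_ne_zero.2 (hr n).ne'
  have hw0 : w n ≠ 0 := ((hQ n).trans_le (hQw n)).ne'
  have hQ1 : 1 - Q n ≠ 0 := (sub_pos.2 hn).ne'
  have hQne : Q n ≠ 0 := (hQ n).ne'
  rw [eq_div_iff hQ1 |>.2 (hp n)]
  field_simp
  ring

lemma tendsto_div_comp_of_regularVariation {ι : Type*} {l : Filter ι} {G : ℝ → ℝ} {α : ℝ}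
    (hRV : ∀ t : ℝ, 0 < t → Tendsto (fun x => G (t * x) / G x) atTop (𝓝 (t ^ (-α))))
    {u : ι → ℝ} (hu : Tendsto u l atTop) {c : ℝ} (hc : 0 < c) :
    Tendsto (fun i => G (u i / c) / G (u i)) l (𝓝 (c ^ α)) := by
  have h := (hRV c⁻¹ (inv_pos.2 hc)).comp hu
  rw [Real.inv_rpow hc.le, Real.rpow_neg hc.le, inv_inv] at h
  simpa only [Function.comp_def, inv_mul_eq_div] using h

lemma tendsto_tail_max_div_tail_mma {ι : Type*} {l : Filter ι} {G : ℝ → ℝ} {α c0 c1 : ℝ}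
    (hc0 : 0 < c0) (hc1 : 0 < c1)
    (hRV : ∀ t : ℝ, 0 < t → Tendsto (fun x => G (t * x) / G x) atTop (𝓝 (t ^ (-α))))
    {u : ι → ℝ} (hu : Tendsto u l atTop) (hG : ∀ i, G (u i) ≠ 0)
    (hG1 : Tendsto (fun i => G (u i / c1)) l (𝓝 0)) :
    Tendsto (fun i => G (u i / max c0 c1) / (1 - (1 - G (u i / c0)) * (1 - G (u i / c1)))) l
      (𝓝 (max c0 c1 ^ α / (c0 ^ α + c1 ^ α))) := by
  have h0 := tendsto_div_comp_of_regularVariation hRV hu hc0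
  have hden : Tendsto (fun i => (1 - (1 - G (u i / c0)) * (1 - G (u i / c1))) / G (u i)) l
      (𝓝 (c0 ^ α + c1 ^ α)) := by
    have h := (h0.add (tendsto_div_comp_of_regularVariation hRV hu hc1)).sub (h0.mul hG1)
    rw [mul_zero, sub_zero] at h
    refine h.congr fun i => ?_
    field_simp
    ring
  refine ((tendsto_div_comp_of_regularVariation hRV hu (lt_max_of_lt_left hc0)).div hden
    (by positivity)).congr fun i => div_div_div_cancel_right₀ (hG i) _ _

-- The largest coefficient with which `ξ k` enters `X lo, …, X (hi - 1)`.
def mmaBlockWeight (c0 c1 : ℝ) (lo hi k : ℤ) : ℝ :=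
  if k = lo then c0 else if k = hi then c1 else max c0 c1

section MMABlockWeight

variable {c0 c1 : ℝ} {lo hi k : ℤ}

lemma mmaBlockWeight_pos (hc0 : 0 < c0) (hc1 : 0 < c1) : 0 < mmaBlockWeight c0 c1 lo hi k := by
  unfold mmaBlockWeight
  split_ifs <;> positivity

lemma left_le_mmaBlockWeight (hk : k ≠ hi) : c0 ≤ mmaBlockWeight c0 c1 lo hi k := by
  unfold mmaBlockWeight
  split_ifs <;> simp_all

lemma right_le_mmaBlockWeight (hk : k ≠ lo) : c1 ≤ mmaBlockWeight c0 c1 lo hi k := by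
  unfold mmaBlockWeight
  split_ifs <;> simp_all

lemma forall_max_mul_le_iff_mmaBlockWeight {x : ℤ → ℝ} (hx : ∀ k, 0 ≤ x k) (L : ℕ) (T : ℝ) :
    (∀ i, lo ≤ i → i ≤ lo + L → max (c0 * x i) (c1 * x (i + 1)) ≤ T) ↔
      ∀ k ∈ Icc lo (lo + L + 1), mmaBlockWeight c0 c1 lo (lo + L + 1) k * x k ≤ T := by
  constructor
  · intro h k hk
    rw [mem_Icc] at hk
    unfold mmaBlockWeight
    split_ifs with hlo hhi
    · exact (le_max_left _ _).trans (h k hlo.ge (by omega))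
    · have hprev := h (k - 1) (by omega) (by omega)
      rw [sub_add_cancel] at hprev
      exact (le_max_right _ _).trans hprev
    · have hprev := h (k - 1) (by omega) (by omega)
      rw [sub_add_cancel] at hprev
      rw [max_mul_of_nonneg _ _ (hx k)]
      exact max_le ((le_max_left _ _).trans (h k (by omega) (by omega)))
        ((le_max_right _ _).trans hprev)
  · intro h i hi₁ hi₂
    exact max_le
      ((mul_le_mul_of_nonneg_right (left_le_mmaBlockWeight (by omega)) (hx i)).trans
        (h i (mem_Icc.2 ⟨hi₁, by omega⟩)))
      ((mul_le_mul_of_nonneg_right (right_le_mmaBlockWeight (by omega)) (hx (i + 1))).trans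
        (h (i + 1) (mem_Icc.2 ⟨by omega, by omega⟩)))

lemma prod_mmaBlockWeight {M : Type*} [CommMonoid M] (f : ℝ → M) (L : ℕ) :
    ∏ k ∈ Icc lo (lo + L + 1), f (mmaBlockWeight c0 c1 lo (lo + L + 1) k) =
      f c0 * f c1 * f (max c0 c1) ^ L := by
  have hsplit : Icc lo (lo + L + 1) = insert lo (insert (lo + L + 1) (Ioo lo (lo + L + 1))) := by
    ext k
    simp only [mem_Icc, mem_insert, mem_Ioo]
    omega
  have hmid : ∀ k ∈ Ioo lo (lo + L + 1), f (mmaBlockWeight c0 c1 lo (lo + L + 1) k) =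
      f (max c0 c1) := fun k hk => by
    rw [mem_Ioo] at hk
    rw [mmaBlockWeight, if_neg hk.1.ne', if_neg hk.2.ne]
  rw [hsplit, prod_insert (by simp), prod_insert (by simp), prod_congr rfl hmid, prod_const,
    Int.card_Ioo, mmaBlockWeight, mmaBlockWeight, if_pos rfl, if_neg (by omega), if_pos rfl,
    show (lo + L + 1 - lo - 1).toNat = L by omega, mul_assoc]

end MMABlockWeight

lemma iIndepFun.measure_biInter_preimage_eq_prod {Ω ι β : Type*} [MeasurableSpace Ω]
    [MeasurableSpace β] {P : Measure Ω} {ξ : ι → Ω → β} (hmeas : ∀ i, Measurable (ξ i))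
    (hindep : iIndepFun ξ P) {i₀ : ι} (hident : ∀ i, P.map (ξ i) = P.map (ξ i₀))
    (s : Finset ι) {S : ι → Set β} (hS : ∀ i, MeasurableSet (S i)) :
    P (⋂ i ∈ s, ξ i ⁻¹' S i) = ∏ i ∈ s, P (ξ i₀ ⁻¹' S i) := by
  rw [hindep.measure_inter_preimage_eq_mul s fun i _ => hS i]
  refine prod_congr rfl fun i _ => ?_
  rw [← Measure.map_apply (hmeas i) (hS i), hident, Measure.map_apply (hmeas i₀) (hS i)]

section ExceedanceEvent

variable {Ω : Type*}

def exceedanceEvent (X : ℤ → Ω → ℝ) (T : ℝ) (lo hi : ℤ) : Set Ω :=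
  {ω | ∃ i : ℤ, lo ≤ i ∧ i ≤ hi ∧ X i ω > T}

lemma compl_exceedanceEvent (X : ℤ → Ω → ℝ) (T : ℝ) (lo hi : ℤ) :
    (exceedanceEvent X T lo hi)ᶜ = {ω | ∀ i, lo ≤ i → i ≤ hi → X i ω ≤ T} := by
  ext ω
  simp [exceedanceEvent]

lemma exceedanceEvent_union {X : ℤ → Ω → ℝ} {T : ℝ} {lo mid hi : ℤ} (hlo : lo ≤ mid + 1)
    (hhi : mid ≤ hi) :
    exceedanceEvent X T lo mid ∪ exceedanceEvent X T (mid + 1) hi = exceedanceEvent X T lo hi := by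
  ext ω
  simp only [exceedanceEvent, Set.mem_union, Set.mem_ofPred_eq]
  constructor
  · rintro (⟨i, h₁, h₂, h⟩ | ⟨i, h₁, h₂, h⟩) <;> exact ⟨i, by omega, by omega, h⟩
  · rintro ⟨i, h₁, h₂, h⟩
    rcases le_or_gt i mid with hi | hi
    exacts [Or.inl ⟨i, h₁, hi, h⟩, Or.inr ⟨i, hi, h₂, h⟩]

end ExceedanceEvent

section Probability

variable {Ω : Type*} [MeasurableSpace Ω] {P : Measure Ω} [IsProbabilityMeasure P]

lemma measureReal_preimage_Iic_eq_cdf {Y : Ω → ℝ} (hY : Measurable Y) (x : ℝ) :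
    P.real (Y ⁻¹' Set.Iic x) = cdf (P.map Y) x := by
  have := Measure.isProbabilityMeasure_map (μ := P) hY.aemeasurable
  rw [cdf_eq_real, map_measureReal_apply hY measurableSet_Iic]

lemma measureReal_gt_eq_one_sub_cdf {Y : Ω → ℝ} (hY : Measurable Y) (x : ℝ) :
    P.real {ω | Y ω > x} = 1 - cdf (P.map Y) x := by
  rw [← measureReal_preimage_Iic_eq_cdf hY, ← probReal_compl_eq_one_sub (hY measurableSet_Iic)]
  congr 1
  ext ω
  simp

lemma tendsto_measureReal_gt_atTop {Y : Ω → ℝ} (hY : Measurable Y) :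
    Tendsto (fun x => P.real {ω | Y ω > x}) atTop (𝓝 0) := by
  simp_rw [measureReal_gt_eq_one_sub_cdf hY]
  simpa using (tendsto_const_nhds (x := (1 : ℝ))).sub (tendsto_cdf_atTop (P.map Y))

lemma measurableSet_exceedanceEvent {X : ℤ → Ω → ℝ} (hX : ∀ i, Measurable (X i)) (T : ℝ)
    (lo hi : ℤ) : MeasurableSet (exceedanceEvent X T lo hi) := by
  rw [← compl_compl (exceedanceEvent X T lo hi), compl_exceedanceEvent]
  refine MeasurableSet.compl ?_
  simp only [Set.ofPred_forall]
  exact .iInter fun i => .iInter fun _ => .iInter fun _ => measurableSet_le (hX i) measurable_const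

variable {ξ : ℤ → Ω → ℝ} {c0 c1 : ℝ} {X : ℤ → Ω → ℝ}

lemma measurable_mma (hmeas : ∀ j, Measurable (ξ j))
    (hX : ∀ j ω, X j ω = max (c0 * ξ j ω) (c1 * ξ (j + 1) ω)) (j : ℤ) : Measurable (X j) := by
  rw [show X j = fun ω => max (c0 * ξ j ω) (c1 * ξ (j + 1) ω) from funext (hX j)]
  fun_prop

lemma measureReal_compl_exceedanceEvent_mma (hmeas : ∀ j, Measurable (ξ j))
    (hindep : iIndepFun ξ P) (hident : ∀ j, Measure.map (ξ j) P = Measure.map (ξ 0) P)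
    (hnonneg : ∀ j ω, 0 ≤ ξ j ω) (hc0 : 0 < c0) (hc1 : 0 < c1)
    (hX : ∀ j ω, X j ω = max (c0 * ξ j ω) (c1 * ξ (j + 1) ω)) (T : ℝ) (lo : ℤ) (L : ℕ) :
    P.real (exceedanceEvent X T lo (lo + L))ᶜ =
      cdf (P.map (ξ 0)) (T / c0) * cdf (P.map (ξ 0)) (T / c1) *
        cdf (P.map (ξ 0)) (T / max c0 c1) ^ L := by
  have hset : (exceedanceEvent X T lo (lo + L))ᶜ = ⋂ k ∈ Icc lo (lo + L + 1),
      ξ k ⁻¹' Set.Iic (T / mmaBlockWeight c0 c1 lo (lo + L + 1) k) := by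
    ext ω
    simp only [compl_exceedanceEvent, Set.mem_ofPred_eq, hX, Set.mem_iInter, Set.mem_preimage,
      Set.mem_Iic, le_div_iff₀' (mmaBlockWeight_pos hc0 hc1)]
    exact forall_max_mul_le_iff_mmaBlockWeight (fun k => hnonneg k ω) L T
  rw [hset, measureReal_def, iIndepFun.measure_biInter_preimage_eq_prod hmeas hindep hident _
    fun _ => measurableSet_Iic, ENNReal.toReal_prod]
  simp only [← measureReal_def, measureReal_preimage_Iic_eq_cdf (hmeas 0)]
  exact prod_mmaBlockWeight (fun c => cdf (P.map (ξ 0)) (T / c)) L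

lemma measureReal_exceedanceEvent_mma (hmeas : ∀ j, Measurable (ξ j))
    (hindep : iIndepFun ξ P) (hident : ∀ j, Measure.map (ξ j) P = Measure.map (ξ 0) P)
    (hnonneg : ∀ j ω, 0 ≤ ξ j ω) (hc0 : 0 < c0) (hc1 : 0 < c1)
    (hX : ∀ j ω, X j ω = max (c0 * ξ j ω) (c1 * ξ (j + 1) ω))
    (T : ℝ) (lo : ℤ) (L : ℕ) :
    P.real (exceedanceEvent X T lo (lo + L)) =
      1 - cdf (P.map (ξ 0)) (T / c0) * cdf (P.map (ξ 0)) (T / c1) *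
        cdf (P.map (ξ 0)) (T / max c0 c1) ^ L := by
  rw [← measureReal_compl_exceedanceEvent_mma hmeas hindep hident hnonneg hc0 hc1 hX,
    probReal_compl_eq_one_sub (measurableSet_exceedanceEvent (measurable_mma hmeas hX) T _ _),
    sub_sub_cancel]

lemma measureReal_mma_gt (hmeas : ∀ j, Measurable (ξ j))
    (hindep : iIndepFun ξ P) (hident : ∀ j, Measure.map (ξ j) P = Measure.map (ξ 0) P)
    (hnonneg : ∀ j ω, 0 ≤ ξ j ω) (hc0 : 0 < c0) (hc1 : 0 < c1)
    (hX : ∀ j ω, X j ω = max (c0 * ξ j ω) (c1 * ξ (j + 1) ω))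
    (j : ℤ) (T : ℝ) :
    P.real {ω | X j ω > T} =
      1 - (1 - P.real {ω | ξ 0 ω > T / c0}) * (1 - P.real {ω | ξ 0 ω > T / c1}) := by
  have h := measureReal_exceedanceEvent_mma hmeas hindep hident hnonneg hc0 hc1 hX T j 0
  rw [pow_zero, mul_one] at h
  rw [measureReal_gt_eq_one_sub_cdf (hmeas 0), measureReal_gt_eq_one_sub_cdf (hmeas 0),
    sub_sub_cancel, sub_sub_cancel, ← h]
  congr 1
  ext ω
  refine ⟨fun hω => ⟨j, le_rfl, by simp, hω⟩, fun ⟨i, h₁, h₂, hω⟩ => ?_⟩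
  obtain rfl : i = j := by omega
  exact hω

lemma measureReal_gt_div_max_le_mma (hmeas : ∀ j, Measurable (ξ j))
    (hindep : iIndepFun ξ P) (hident : ∀ j, Measure.map (ξ j) P = Measure.map (ξ 0) P)
    (hnonneg : ∀ j ω, 0 ≤ ξ j ω) (hc0 : 0 < c0) (hc1 : 0 < c1)
    (hX : ∀ j ω, X j ω = max (c0 * ξ j ω) (c1 * ξ (j + 1) ω))
    (j : ℤ) (T : ℝ) :
    P.real {ω | ξ 0 ω > T / max c0 c1} ≤ P.real {ω | X j ω > T} := by
  rw [measureReal_mma_gt hmeas hindep hident hnonneg hc0 hc1 hX]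
  have h0 : P.real {ω | ξ 0 ω > T / c0} ≤ 1 := measureReal_le_one
  have h1 : P.real {ω | ξ 0 ω > T / c1} ≤ 1 := measureReal_le_one
  rcases max_choice c0 c1 with h | h <;> rw [h] <;> nlinarith [measureReal_nonneg (μ := P)
    (s := {ω | ξ 0 ω > T / c0}), measureReal_nonneg (μ := P) (s := {ω | ξ 0 ω > T / c1})]

lemma measureReal_inter_exceedanceEvent_mma (hmeas : ∀ j, Measurable (ξ j))
    (hindep : iIndepFun ξ P) (hident : ∀ j, Measure.map (ξ j) P = Measure.map (ξ 0) P)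
    (hnonneg : ∀ j ω, 0 ≤ ξ j ω) (hc0 : 0 < c0) (hc1 : 0 < c1)
    (hX : ∀ j ω, X j ω = max (c0 * ξ j ω) (c1 * ξ (j + 1) ω))
    (T : ℝ) {r : ℕ} (hr : 0 < r) :
    P.real (exceedanceEvent X T 1 r ∩ exceedanceEvent X T (r + 1) (2 * r)) *
        (1 - P.real {ω | ξ 0 ω > T / max c0 c1}) =
      P.real {ω | X 0 ω > T} - P.real {ω | ξ 0 ω > T / max c0 c1} +
        (1 - P.real {ω | X 0 ω > T}) * (1 - (1 - P.real {ω | ξ 0 ω > T / max c0 c1}) ^ r) ^ 2 := by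
  obtain ⟨R, rfl⟩ := Nat.exists_eq_add_one_of_ne_zero hr.ne'
  have hblock : ∀ (lo hi : ℤ) (L : ℕ), hi = lo + L → P.real (exceedanceEvent X T lo hi) =
      1 - cdf (P.map (ξ 0)) (T / c0) * cdf (P.map (ξ 0)) (T / c1) *
        cdf (P.map (ξ 0)) (T / max c0 c1) ^ L := by
    rintro lo hi L rfl
    exact measureReal_exceedanceEvent_mma hmeas hindep hident hnonneg hc0 hc1 hX T lo L
  have h := measureReal_union_add_inter (μ := P) (s := exceedanceEvent X T 1 (R + 1 : ℕ))
    (measurableSet_exceedanceEvent (measurable_mma hmeas hX) T ((R + 1 : ℕ) + 1) (2 * (R + 1 : ℕ)))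
  rw [exceedanceEvent_union (by omega) (by omega), hblock 1 _ (2 * R + 1) (by push_cast; ring),
    hblock 1 _ R (by push_cast; ring), hblock _ _ R (by push_cast; ring)] at h
  rw [measureReal_mma_gt hmeas hindep hident hnonneg hc0 hc1 hX,
    measureReal_gt_eq_one_sub_cdf (hmeas 0), measureReal_gt_eq_one_sub_cdf (hmeas 0),
    measureReal_gt_eq_one_sub_cdf (hmeas 0)]
  linear_combination cdf (P.map (ξ 0)) (T / max c0 c1) * h

end Probability

theorem stmt_3_general
    {Ω : Type*} [MeasurableSpace Ω] (P : Measure Ω) [IsProbabilityMeasure P]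
    (ξ : ℤ → Ω → ℝ) (hmeas : ∀ j, Measurable (ξ j))
    (hindep : iIndepFun ξ P)
    (hident : ∀ j, Measure.map (ξ j) P = Measure.map (ξ 0) P)
    (hnonneg : ∀ j ω, 0 ≤ ξ j ω)
    (hpos : ∀ x : ℝ, 0 < P {ω | ξ 0 ω > x})
    (α : ℝ)
    (hRV : ∀ t : ℝ, 0 < t →
      Tendsto (fun x : ℝ => (P {ω | ξ 0 ω > t * x}).toReal / (P {ω | ξ 0 ω > x}).toReal)
        atTop (nhds (t ^ (-α))))
    (c0 c1 : ℝ) (hc0 : 0 < c0) (hc1 : 0 < c1)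
    (X : ℤ → Ω → ℝ) (hX : ∀ j ω, X j ω = max (c0 * ξ j ω) (c1 * ξ (j + 1) ω))
    (u : ℕ → ℝ) (hu : Tendsto u atTop atTop)
    (w : ℕ → ℝ) (hw : ∀ n, w n = (P {ω | X 0 ω > u n}).toReal)
    (r : ℕ → ℕ) (hrpos : ∀ n, 0 < r n)
    (hrw : Tendsto (fun n => (r n : ℝ) * w n) atTop (nhds 0))
    (A : ℕ → ℤ → Set Ω)
    (hA : ∀ n (j : ℤ), A n j =
      {ω | ∃ i : ℤ, (j - 1) * (r n : ℤ) + 1 ≤ i ∧ i ≤ j * (r n : ℤ) ∧ X i ω > u n})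
    (θ : ℝ) (hθ : θ = (max c0 c1) ^ α / (c0 ^ α + c1 ^ α))
    (hlarge : Tendsto (fun n => (r n : ℝ) ^ 2 * w n) atTop atTop) :
    Tendsto (fun n => (P (A n 1 ∩ A n 2)).toReal / ((r n : ℝ) ^ 2 * w n ^ 2))
      atTop (nhds (θ ^ 2)) := by
  set G : ℝ → ℝ := fun x => P.real {ω | ξ 0 ω > x}
  have hG : ∀ x, 0 < G x := fun x => ENNReal.toReal_pos (hpos x).ne' (measure_ne_top P _)
  have hA12 : ∀ n, A n 1 ∩ A n 2 =
      exceedanceEvent X (u n) 1 (r n) ∩ exceedanceEvent X (u n) (r n + 1) (2 * r n) := fun n => by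
    have hblock : ∀ j : ℤ, A n j = exceedanceEvent X (u n) ((j - 1) * r n + 1) (j * r n) := hA n
    rw [hblock, hblock]
    congr 2 <;> ring
  refine tendsto_div_sq_of_mul_one_sub_eq (Q := fun n => G (u n / max c0 c1)) hrpos
    (fun n => hG _) (fun n => by
      rw [hw]
      exact measureReal_gt_div_max_le_mma hmeas hindep hident hnonneg hc0 hc1 hX 0 _)
    hrw hlarge ?_ fun n => by
      rw [hA12, hw]
      exact measureReal_inter_exceedanceEvent_mma hmeas hindep hident hnonneg hc0 hc1 hX _ (hrpos n)
  rw [hθ]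
  refine (tendsto_tail_max_div_tail_mma (G := G) hc0 hc1 hRV hu (fun n => (hG _).ne')
    ((tendsto_measureReal_gt_atTop (hmeas 0)).comp (hu.atTop_div_const hc1))).congr fun n => ?_
  rw [hw, ← measureReal_def, measureReal_mma_gt hmeas hindep hident hnonneg hc0 hc1 hX]

/-- Large blocks probability of exceedances in two adjacent blocks, MMA(1):
if `r_n^2 w_n → ∞`, then `lim P(A₁ ∩ A₂)/(r_n^2 w_n^2) = θ^2` with
`θ = (max c₀ c₁)^α / (c₀^α + c₁^α)`. -/
theorem stmt_3
    {Ω : Type*} [MeasurableSpace Ω] (P : Measure Ω) [IsProbabilityMeasure P]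
    (ξ : ℤ → Ω → ℝ) (hmeas : ∀ j, Measurable (ξ j))
    (hindep : iIndepFun ξ P)
    (hident : ∀ j, Measure.map (ξ j) P = Measure.map (ξ 0) P)
    (hnonneg : ∀ j ω, 0 ≤ ξ j ω)
    (hpos : ∀ x : ℝ, 0 < P {ω | ξ 0 ω > x})
    (α : ℝ) (hα : 0 < α)
    (hRV : ∀ t : ℝ, 0 < t →
      Tendsto (fun x : ℝ => (P {ω | ξ 0 ω > t * x}).toReal / (P {ω | ξ 0 ω > x}).toReal)
        atTop (nhds (t ^ (-α))))
    (c0 c1 : ℝ) (hc0 : 0 < c0) (hc1 : 0 < c1)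
    (X : ℤ → Ω → ℝ) (hX : ∀ j ω, X j ω = max (c0 * ξ j ω) (c1 * ξ (j + 1) ω))
    (u : ℕ → ℝ) (hu : Tendsto u atTop atTop)
    (w : ℕ → ℝ) (hw : ∀ n, w n = (P {ω | X 0 ω > u n}).toReal)
    (r : ℕ → ℕ) (hrpos : ∀ n, 0 < r n)
    (hr : Tendsto (fun n => (r n : ℝ)) atTop atTop)
    (hrw : Tendsto (fun n => (r n : ℝ) * w n) atTop (nhds 0))
    (A : ℕ → ℤ → Set Ω)
    (hA : ∀ n (j : ℤ), A n j =
      {ω | ∃ i : ℤ, (j - 1) * (r n : ℤ) + 1 ≤ i ∧ i ≤ j * (r n : ℤ) ∧ X i ω > u n})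
    (θ : ℝ) (hθ : θ = (max c0 c1) ^ α / (c0 ^ α + c1 ^ α))
    (hlarge : Tendsto (fun n => (r n : ℝ) ^ 2 * w n) atTop atTop) :
    Tendsto (fun n => (P (A n 1 ∩ A n 2)).toReal / ((r n : ℝ) ^ 2 * w n ^ 2))
      atTop (nhds (θ ^ 2)) :=
  stmt_3_general P ξ hmeas hindep hident hnonneg hpos α hRV c0 c1 hc0 hc1 X hX u hu w hw r hrpos hrw
    A hA θ hθ hlarge
end

section
/- (Joint cluster length over two adjacent blocks, MMA(1), small blocks.) Fix γ ≥ 0. If in addition r_n^{γ+2} w_n → 0, then lim_{n→∞} (1/w_n) E[(t_2^{last} − t_1^{first})^γ · 1_{A_1 ∩ A_2}] = (min(c_0,c_1))^α / (c_0^α + c_1^α), where t_1^{first} is the first exceedance time in block I_1 and t_2^{last} is the last exceedance time in block I_2. -/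
open MeasureTheory Filter ProbabilityTheory Topology

/-!
Write `m = min c₀ c₁` and call `ξ_a` big if `c₀ ξ_a > u` or `c₁ ξ_a > u`. On the event
`B = {m ξ_{r+1} > u}` both `X_r` and `X_{r+1}` exceed `u`, and unless a second big jump occurs
among `ξ_1, …, ξ_{2r+1}` these are the only exceedances in `I₁ ∪ I₂`, so `t₂ˡᵃˢᵗ - t₁ᶠⁱʳˢᵗ = 1`.
Conversely, exceedances in both blocks without `B` force two big jumps. By independence two big
jumps have probability `O(r² w²)`, and the integrand is at most `(2r)^γ`, so the integral is
`P(B) + O(r^{γ+2} w²)`. Finally `w = P(c₀ξ > u) + P(c₁ξ > u) - P(c₀ξ > u) P(c₁ξ > u)`, and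
regular variation gives `P(B) / w → m^α / (c₀^α + c₁^α)`.
-/

section Sequences

variable (c0 c1 : ℝ)

def mma1 (x : ℤ → ℝ) (j : ℤ) : ℝ := max (c0 * x j) (c1 * x (j + 1))

def exceedances (y : ℤ → ℝ) (v : ℝ) (lo hi : ℤ) : Set ℤ := {i | lo ≤ i ∧ i ≤ hi ∧ v < y i}

noncomputable def clusterSpan (y : ℤ → ℝ) (v : ℝ) (R : ℕ) : ℤ :=
  sSup (exceedances y v (R + 1) (2 * R)) - sInf (exceedances y v 1 R)

def bigJumps (v : ℝ) : Set ℝ := {t | v < c0 * t ∨ v < c1 * t}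

variable {c0 c1}

lemma sInf_mem_exceedances {y : ℤ → ℝ} {v : ℝ} {lo hi : ℤ}
    (h : (exceedances y v lo hi).Nonempty) :
    sInf (exceedances y v lo hi) ∈ exceedances y v lo hi :=
  Int.csInf_mem h ⟨lo, fun _ hk => hk.1⟩

lemma sSup_mem_exceedances {y : ℤ → ℝ} {v : ℝ} {lo hi : ℤ}
    (h : (exceedances y v lo hi).Nonempty) :
    sSup (exceedances y v lo hi) ∈ exceedances y v lo hi :=
  Int.csSup_mem h ⟨hi, fun _ hk => hk.2.1⟩

lemma clusterSpan_mem_Icc {y : ℤ → ℝ} {v : ℝ} {R : ℕ}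
    (h1 : (exceedances y v 1 R).Nonempty) (h2 : (exceedances y v (R + 1) (2 * R)).Nonempty) :
    1 ≤ clusterSpan y v R ∧ clusterSpan y v R ≤ 2 * R := by
  have := sInf_mem_exceedances h1
  have := sSup_mem_exceedances h2
  unfold clusterSpan
  simp only [exceedances, Set.mem_ofPred_eq] at *
  omega

lemma mem_bigJumps_of_lt_min_mul {v t : ℝ} (h : v < min c0 c1 * t) :
    t ∈ bigJumps c0 c1 v := by
  rcases min_cases c0 c1 with ⟨hm, -⟩ | ⟨hm, -⟩ <;> rw [hm] at h
  exacts [Or.inl h, Or.inr h]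

variable {x : ℤ → ℝ} {v : ℝ} {R : ℕ}

lemma lt_min_mul_of_exceedances_nonempty
    (hU : (x ⁻¹' bigJumps c0 c1 v ∩ Set.Icc 1 (2 * R + 1)).Subsingleton)
    (h1 : (exceedances (mma1 c0 c1 x) v 1 R).Nonempty)
    (h2 : (exceedances (mma1 c0 c1 x) v (R + 1) (2 * R)).Nonempty) :
    v < min c0 c1 * x (R + 1) := by
  obtain ⟨i, hi1, hiR, hi⟩ := h1
  obtain ⟨j, hjR, hj2, hj⟩ := h2
  have big0 : ∀ {a : ℤ}, v < c0 * x a → 1 ≤ a → a ≤ 2 * R + 1 →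
      a ∈ x ⁻¹' bigJumps c0 c1 v ∩ Set.Icc 1 (2 * R + 1) := fun h ha1 ha2 => ⟨Or.inl h, ha1, ha2⟩
  have big1 : ∀ {a : ℤ}, v < c1 * x a → 1 ≤ a → a ≤ 2 * R + 1 →
      a ∈ x ⁻¹' bigJumps c0 c1 v ∩ Set.Icc 1 (2 * R + 1) := fun h ha1 ha2 => ⟨Or.inr h, ha1, ha2⟩
  rcases lt_max_iff.1 hi with hi | hi <;> rcases lt_max_iff.1 hj with hj | hj
  · have := hU (big0 hi (by omega) (by omega)) (big0 hj (by omega) (by omega))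
    omega
  · have := hU (big0 hi (by omega) (by omega)) (big1 hj (by omega) (by omega))
    omega
  · have hij := hU (big1 hi (by omega) (by omega)) (big0 hj (by omega) (by omega))
    obtain rfl : j = R + 1 := by omega
    rw [hij] at hi
    rcases min_cases c0 c1 with ⟨hm, -⟩ | ⟨hm, -⟩ <;> rw [hm] <;> assumption
  · have := hU (big1 hi (by omega) (by omega)) (big1 hj (by omega) (by omega))
    omega

lemma lt_mma1_of_lt_min_mul {j : ℤ} (hx : 0 ≤ x (j + 1)) (h : v < min c0 c1 * x (j + 1)) :
    v < mma1 c0 c1 x j ∧ v < mma1 c0 c1 x (j + 1) :=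
  ⟨lt_max_of_lt_right (h.trans_le (mul_le_mul_of_nonneg_right (min_le_right _ _) hx)),
    lt_max_of_lt_left (h.trans_le (mul_le_mul_of_nonneg_right (min_le_left _ _) hx))⟩

lemma clusterSpan_eq_one (hU : (x ⁻¹' bigJumps c0 c1 v ∩ Set.Icc 1 (2 * R + 1)).Subsingleton)
    (hR : 0 < R) (hx : 0 ≤ x (R + 1)) (h : v < min c0 c1 * x (R + 1)) :
    clusterSpan (mma1 c0 c1 x) v R = 1 := by
  obtain ⟨hXR, hXR1⟩ := lt_mma1_of_lt_min_mul hx h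
  have hbig : (R + 1 : ℤ) ∈ x ⁻¹' bigJumps c0 c1 v ∩ Set.Icc 1 (2 * R + 1) :=
    ⟨mem_bigJumps_of_lt_min_mul h, by omega, by omega⟩
  have honly : ∀ i : ℤ, 1 ≤ i → i ≤ 2 * R → v < mma1 c0 c1 x i → i = R ∨ i = R + 1 := by
    intro i hi1 hi2 hi
    rcases lt_max_iff.1 hi with hi | hi
    · exact .inr (hU ⟨Or.inl hi, hi1, by omega⟩ hbig)
    · have := hU ⟨Or.inr hi, by omega, by omega⟩ hbig
      omega
  have h1 : exceedances (mma1 c0 c1 x) v 1 R = {(R : ℤ)} := by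
    ext i
    simp only [exceedances, Set.mem_ofPred_eq, Set.mem_singleton_iff]
    constructor
    · rintro ⟨hi1, hi2, hi⟩
      have := honly i hi1 (by omega) hi
      omega
    · rintro rfl
      exact ⟨by omega, le_rfl, hXR⟩
  have h2 : exceedances (mma1 c0 c1 x) v (R + 1) (2 * R) = {(R : ℤ) + 1} := by
    ext i
    simp only [exceedances, Set.mem_ofPred_eq, Set.mem_singleton_iff]
    constructor
    · rintro ⟨hi1, hi2, hi⟩
      have := honly i (by omega) hi2 hi
      omega
    · rintro rfl
      exact ⟨le_rfl, by omega, hXR1⟩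
  simp [clusterSpan, h1, h2]

end Sequences

section TwoBigJumps

variable {Ω : Type*}

def twoBigJumps (c0 c1 v : ℝ) (ξ : ℤ → Ω → ℝ) (R : ℕ) : Set Ω :=
  ⋃ p ∈ (Finset.Icc (1 : ℤ) (2 * R + 1)).offDiag,
    ξ p.1 ⁻¹' bigJumps c0 c1 v ∩ ξ p.2 ⁻¹' bigJumps c0 c1 v

lemma subsingleton_of_notMem_twoBigJumps {ξ : ℤ → Ω → ℝ} {c0 c1 v : ℝ} {R : ℕ} {ω : Ω}
    (h : ω ∉ twoBigJumps c0 c1 v ξ R) :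
    ((ξ · ω) ⁻¹' bigJumps c0 c1 v ∩ Set.Icc 1 (2 * R + 1)).Subsingleton := by
  intro a ha b hb
  by_contra hab
  exact h (Set.mem_biUnion (x := (a, b))
    (Finset.mem_offDiag.2 ⟨Finset.mem_Icc.2 ha.2, Finset.mem_Icc.2 hb.2, hab⟩) ⟨ha.1, hb.1⟩)

end TwoBigJumps

section Measurability

variable {Ω ι β : Type*} [MeasurableSpace Ω] [MeasurableSpace β]

lemma measurable_comp_setOf_mem_finset_and (s : Finset ι) {p : ι → Ω → Prop}
    (hp : ∀ i ∈ s, MeasurableSet {ω | p i ω}) (Φ : Set ι → β) :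
    Measurable fun ω => Φ {i | i ∈ s ∧ p i ω} := by
  classical
  let V : Ω → s → Bool := fun ω i => decide (p i ω)
  have hV : Measurable V :=
    measurable_pi_lambda _ fun i => measurable_to_bool (by
      simp only [V, Set.preimage, Set.mem_singleton_iff, decide_eq_true_eq]
      exact hp i i.2)
  have hΦV : (fun ω => Φ {i | i ∈ s ∧ p i ω})
      = (fun b : s → Bool => Φ {i | ∃ h : i ∈ s, b ⟨i, h⟩}) ∘ V := by
    funext ω
    simp [V]
  rw [hΦV]
  exact Measurable.of_discrete.comp hV

variable {Y : ℤ → Ω → ℝ}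

lemma measurable_comp_exceedances (hY : ∀ i, Measurable (Y i)) (v : ℝ) (lo hi : ℤ)
    (Φ : Set ℤ → β) : Measurable fun ω => Φ (exceedances (Y · ω) v lo hi) := by
  have hexc : ∀ ω, exceedances (Y · ω) v lo hi = {i | i ∈ Finset.Icc lo hi ∧ v < Y i ω} := by
    intro ω
    ext i
    simp [exceedances, and_assoc]
  simp only [hexc]
  exact measurable_comp_setOf_mem_finset_and _
    (fun i _ => measurableSet_lt measurable_const (hY i)) Φ

lemma measurableSet_exceedances_nonempty (hY : ∀ i, Measurable (Y i)) (v : ℝ) (lo hi : ℤ) :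
    MeasurableSet {ω | (exceedances (Y · ω) v lo hi).Nonempty} :=
  measurableSet_setOfPred.2 (measurable_comp_exceedances hY v lo hi Set.Nonempty)

lemma measurable_clusterSpan (hY : ∀ i, Measurable (Y i)) (v : ℝ) (R : ℕ) :
    Measurable fun ω => clusterSpan (Y · ω) v R :=
  (measurable_comp_exceedances hY v (R + 1) (2 * R) sSup).sub
    (measurable_comp_exceedances hY v 1 R sInf)

lemma measurableSet_lt_const_mul (v c : ℝ) : MeasurableSet {t : ℝ | v < c * t} :=
  measurableSet_lt measurable_const (measurable_const.mul measurable_id)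

lemma measurableSet_bigJumps (c0 c1 v : ℝ) : MeasurableSet (bigJumps c0 c1 v) :=
  (measurableSet_lt_const_mul v c0).union (measurableSet_lt_const_mul v c1)

lemma measurableSet_twoBigJumps {ξ : ℤ → Ω → ℝ} (hmeas : ∀ j, Measurable (ξ j))
    (c0 c1 v : ℝ) (R : ℕ) : MeasurableSet (twoBigJumps c0 c1 v ξ R) :=
  Finset.measurableSet_biUnion _ fun p _ =>
    ((measurableSet_bigJumps c0 c1 v).preimage (hmeas p.1)).inter
      ((measurableSet_bigJumps c0 c1 v).preimage (hmeas p.2))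

end Measurability

lemma abs_setIntegral_sub_measureReal_le {Ω : Type*} [MeasurableSpace Ω] {μ : Measure Ω}
    [IsFiniteMeasure μ] {f : Ω → ℝ} {S B E : Set Ω} {M : ℝ} (hS : MeasurableSet S)
    (hE : MeasurableSet E) (hEB : E ⊆ B) (hBS : B ⊆ S)
    (hf : AEStronglyMeasurable f (μ.restrict S)) (hfE : ∀ ω ∈ E, f ω = 1)
    (hfS : ∀ ω ∈ S, 0 ≤ f ω ∧ f ω ≤ M) (hM : 1 ≤ M) :
    |∫ ω in S, f ω ∂μ - μ.real B| ≤ M * μ.real (S \ E) := by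
  have hES : E ⊆ S := hEB.trans hBS
  have hint : IntegrableOn f S μ :=
    Integrable.of_bound hf M ((ae_restrict_iff' hS).2 (ae_of_all _ fun ω hω => by
      rw [Real.norm_eq_abs, abs_of_nonneg (hfS ω hω).1]; exact (hfS ω hω).2))
  have hsplit : ∫ ω in S, f ω ∂μ = μ.real E + ∫ ω in S \ E, f ω ∂μ := by
    conv_lhs => rw [← Set.union_sdiff_cancel hES]
    rw [setIntegral_union Set.disjoint_sdiff_right (hS.diff hE) (hint.mono_set hES)
      (hint.mono_set Set.sdiff_subset), setIntegral_congr_fun hE hfE, setIntegral_const,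
      smul_eq_mul, mul_one]
  have hrest_nonneg : 0 ≤ ∫ ω in S \ E, f ω ∂μ :=
    setIntegral_nonneg (hS.diff hE) fun ω hω => (hfS ω hω.1).1
  have hrest_le : ∫ ω in S \ E, f ω ∂μ ≤ M * μ.real (S \ E) := by
    refine (Real.le_norm_self _).trans
      (norm_setIntegral_le_of_norm_le_const (measure_lt_top _ _) fun ω hω => ?_)
    rw [Real.norm_eq_abs, abs_of_nonneg (hfS ω hω.1).1]
    exact (hfS ω hω.1).2
  have hEleB : μ.real E ≤ μ.real B := measureReal_mono hEB
  have hBle : μ.real B ≤ μ.real E + μ.real (S \ E) :=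
    (measureReal_mono fun ω hω => by by_cases h : ω ∈ E <;> simp_all [hBS hω]).trans
      (measureReal_union_le E (S \ E))
  have hdiff_nonneg : 0 ≤ μ.real (S \ E) := measureReal_nonneg
  rw [abs_le]
  constructor <;> nlinarith

section MMA1

variable {Ω : Type*} [MeasurableSpace Ω] {P : Measure Ω} {ξ : ℤ → Ω → ℝ} {c0 c1 v : ℝ}

lemma measurable_mma1 (hmeas : ∀ j, Measurable (ξ j)) (i : ℤ) :
    Measurable fun ω => mma1 c0 c1 (ξ · ω) i :=
  (measurable_const.mul (hmeas i)).max (measurable_const.mul (hmeas (i + 1)))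

lemma measureReal_preimage_eq_preimage_zero (hmeas : ∀ j, Measurable (ξ j))
    (hident : ∀ j, Measure.map (ξ j) P = Measure.map (ξ 0) P) (j : ℤ) {s : Set ℝ}
    (hs : MeasurableSet s) : P.real (ξ j ⁻¹' s) = P.real (ξ 0 ⁻¹' s) :=
  congrArg ENNReal.toReal
    ((IdentDistrib.mk (hmeas j).aemeasurable (hmeas 0).aemeasurable (hident j)).measure_mem_eq hs)

lemma measureReal_lt_mma1 [IsFiniteMeasure P] (hmeas : ∀ j, Measurable (ξ j))
    (hindep : iIndepFun ξ P) (hident : ∀ j, Measure.map (ξ j) P = Measure.map (ξ 0) P) :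
    P.real {ω | v < mma1 c0 c1 (ξ · ω) 0} = P.real {ω | v < c0 * ξ 0 ω} +
      P.real {ω | v < c1 * ξ 0 ω} - P.real {ω | v < c0 * ξ 0 ω} * P.real {ω | v < c1 * ξ 0 ω} := by
  have hunion : {ω | v < mma1 c0 c1 (ξ · ω) 0}
      = ξ 0 ⁻¹' {t | v < c0 * t} ∪ ξ 1 ⁻¹' {t | v < c1 * t} := by
    ext ω
    simp [mma1]
  have hinter : P.real (ξ 0 ⁻¹' {t | v < c0 * t} ∩ ξ 1 ⁻¹' {t | v < c1 * t})
      = P.real (ξ 0 ⁻¹' {t | v < c0 * t}) * P.real (ξ 1 ⁻¹' {t | v < c1 * t}) := by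
    simp only [measureReal_def, ← ENNReal.toReal_mul,
      (hindep.indepFun (by decide : (0 : ℤ) ≠ 1)).measure_inter_preimage_eq_mul _ _
        (measurableSet_lt_const_mul v c0) (measurableSet_lt_const_mul v c1)]
  have hincl_excl := measureReal_union_add_inter (μ := P) (s := ξ 0 ⁻¹' {t | v < c0 * t})
    ((measurableSet_lt_const_mul v c1).preimage (hmeas 1))
  rw [hinter, measureReal_preimage_eq_preimage_zero hmeas hident 1
    (measurableSet_lt_const_mul v c1)] at hincl_excl
  rw [hunion]
  simp only [Set.preimage_ofPred_eq] at hincl_excl ⊢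
  linarith

lemma measureReal_lt_mul_le_measureReal_lt_mma1 [IsFiniteMeasure P]
    (hmeas : ∀ j, Measurable (ξ j)) (hident : ∀ j, Measure.map (ξ j) P = Measure.map (ξ 0) P) :
    P.real {ω | v < c0 * ξ 0 ω} ≤ P.real {ω | v < mma1 c0 c1 (ξ · ω) 0} ∧
      P.real {ω | v < c1 * ξ 0 ω} ≤ P.real {ω | v < mma1 c0 c1 (ξ · ω) 0} := by
  refine ⟨measureReal_mono fun ω hω => show v < max _ _ from lt_max_of_lt_left hω, ?_⟩
  change P.real (ξ 0 ⁻¹' {t | v < c1 * t}) ≤ _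
  rw [← measureReal_preimage_eq_preimage_zero hmeas hident 1 (measurableSet_lt_const_mul v c1)]
  exact measureReal_mono fun ω hω => show v < max _ _ from lt_max_of_lt_right hω

lemma measureReal_bigJumps_le [IsFiniteMeasure P] (hmeas : ∀ j, Measurable (ξ j))
    (hident : ∀ j, Measure.map (ξ j) P = Measure.map (ξ 0) P) (a : ℤ) :
    P.real (ξ a ⁻¹' bigJumps c0 c1 v) ≤ 2 * P.real {ω | v < mma1 c0 c1 (ξ · ω) 0} := by
  obtain ⟨h0, h1⟩ := measureReal_lt_mul_le_measureReal_lt_mma1 (c0 := c0) (c1 := c1) (v := v)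
    hmeas hident
  rw [measureReal_preimage_eq_preimage_zero hmeas hident a (measurableSet_bigJumps c0 c1 v)]
  calc P.real (ξ 0 ⁻¹' bigJumps c0 c1 v)
      ≤ P.real {ω | v < c0 * ξ 0 ω} + P.real {ω | v < c1 * ξ 0 ω} := measureReal_union_le _ _
    _ ≤ _ := by linarith

lemma measureReal_twoBigJumps_le [IsFiniteMeasure P] (hmeas : ∀ j, Measurable (ξ j))
    (hindep : iIndepFun ξ P) (hident : ∀ j, Measure.map (ξ j) P = Measure.map (ξ 0) P)
    {R : ℕ} (hR : 0 < R) :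
    P.real (twoBigJumps c0 c1 v ξ R) ≤
      36 * R ^ 2 * P.real {ω | v < mma1 c0 c1 (ξ · ω) 0} ^ 2 := by
  set w := P.real {ω | v < mma1 c0 c1 (ξ · ω) 0}
  set s := Finset.Icc (1 : ℤ) (2 * R + 1)
  have hw : 0 ≤ w := measureReal_nonneg
  have hpair : ∀ p ∈ s.offDiag,
      P.real (ξ p.1 ⁻¹' bigJumps c0 c1 v ∩ ξ p.2 ⁻¹' bigJumps c0 c1 v) ≤ (2 * w) * (2 * w) := by
    intro p hp
    rw [measureReal_def,
      (hindep.indepFun (Finset.mem_offDiag.1 hp).2.2).measure_inter_preimage_eq_mul _ _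
        (measurableSet_bigJumps c0 c1 v) (measurableSet_bigJumps c0 c1 v), ENNReal.toReal_mul]
    exact mul_le_mul (measureReal_bigJumps_le hmeas hident _)
      (measureReal_bigJumps_le hmeas hident _) measureReal_nonneg (by linarith)
  have hcard : (s.offDiag.card : ℝ) ≤ 9 * R ^ 2 := by
    have hs : s.card = 2 * R + 1 := by simp [s]; omega
    have : s.offDiag.card ≤ 9 * R ^ 2 := by
      rw [Finset.offDiag_card, hs]
      exact (Nat.sub_le _ _).trans (by nlinarith)
    exact_mod_cast this
  calc P.real (twoBigJumps c0 c1 v ξ R)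
      ≤ ∑ p ∈ s.offDiag, P.real (ξ p.1 ⁻¹' bigJumps c0 c1 v ∩ ξ p.2 ⁻¹' bigJumps c0 c1 v) :=
        measureReal_biUnion_finset_le _ _
    _ ≤ s.offDiag.card * ((2 * w) * (2 * w)) := by simpa using Finset.sum_le_sum hpair
    _ ≤ 9 * R ^ 2 * ((2 * w) * (2 * w)) := by gcongr
    _ = 36 * R ^ 2 * w ^ 2 := by ring

theorem abs_setIntegral_clusterSpan_sub_le [IsProbabilityMeasure P]
    (hmeas : ∀ j, Measurable (ξ j)) (hindep : iIndepFun ξ P)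
    (hident : ∀ j, Measure.map (ξ j) P = Measure.map (ξ 0) P)
    (hnonneg : ∀ j ω, 0 ≤ ξ j ω) {γ : ℝ} (hγ : 0 ≤ γ) {R : ℕ} (hR : 0 < R) :
    |∫ ω in {ω | (exceedances (mma1 c0 c1 (ξ · ω)) v 1 R).Nonempty} ∩
          {ω | (exceedances (mma1 c0 c1 (ξ · ω)) v (R + 1) (2 * R)).Nonempty},
          ((clusterSpan (mma1 c0 c1 (ξ · ω)) v R : ℤ) : ℝ) ^ γ ∂P
        - P.real {ω | v < min c0 c1 * ξ 0 ω}|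
      ≤ 36 * 2 ^ γ * (R : ℝ) ^ (γ + 2) * P.real {ω | v < mma1 c0 c1 (ξ · ω) 0} ^ 2 := by
  set S := {ω | (exceedances (mma1 c0 c1 (ξ · ω)) v 1 R).Nonempty} ∩
    {ω | (exceedances (mma1 c0 c1 (ξ · ω)) v (R + 1) (2 * R)).Nonempty}
  set B := {ω | v < min c0 c1 * ξ (R + 1) ω}
  set D := twoBigJumps c0 c1 v ξ R
  have hBS : B ⊆ S := fun ω hω => by
    obtain ⟨hXR, hXR1⟩ := lt_mma1_of_lt_min_mul (x := (ξ · ω)) (hnonneg _ ω) hω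
    exact ⟨⟨R, by omega, le_rfl, hXR⟩, ⟨R + 1, le_rfl, by omega, hXR1⟩⟩
  have hSE : S \ (B \ D) ⊆ D := fun ω hω => by
    by_contra hωD
    exact hω.2 ⟨lt_min_mul_of_exceedances_nonempty (subsingleton_of_notMem_twoBigJumps hωD)
      hω.1.1 hω.1.2, hωD⟩
  have hfE : ∀ ω ∈ B \ D, ((clusterSpan (mma1 c0 c1 (ξ · ω)) v R : ℤ) : ℝ) ^ γ = 1 := by
    rintro ω ⟨hωB, hωD⟩
    rw [clusterSpan_eq_one (subsingleton_of_notMem_twoBigJumps hωD) hR (hnonneg _ ω) hωB]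
    simp
  have hfS : ∀ ω ∈ S, 0 ≤ ((clusterSpan (mma1 c0 c1 (ξ · ω)) v R : ℤ) : ℝ) ^ γ ∧
      ((clusterSpan (mma1 c0 c1 (ξ · ω)) v R : ℤ) : ℝ) ^ γ ≤ (2 * R) ^ γ := by
    rintro ω ⟨h1, h2⟩
    obtain ⟨hlo, hhi⟩ := clusterSpan_mem_Icc h1 h2
    have hlo' : (0 : ℝ) ≤ clusterSpan (mma1 c0 c1 (ξ · ω)) v R := by exact_mod_cast (by omega)
    have hhi' : (clusterSpan (mma1 c0 c1 (ξ · ω)) v R : ℝ) ≤ 2 * R := by exact_mod_cast hhi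
    exact ⟨Real.rpow_nonneg hlo' γ, Real.rpow_le_rpow hlo' hhi' hγ⟩
  have hM : (1 : ℝ) ≤ (2 * R) ^ γ :=
    Real.one_le_rpow (by linarith [Nat.one_le_cast (α := ℝ).2 hR]) hγ
  have hS : MeasurableSet S :=
    (measurableSet_exceedances_nonempty (measurable_mma1 hmeas) v 1 R).inter
      (measurableSet_exceedances_nonempty (measurable_mma1 hmeas) v (R + 1) (2 * R))
  have hE : MeasurableSet (B \ D) :=
    ((measurableSet_lt_const_mul v _).preimage (hmeas _)).diff
      (measurableSet_twoBigJumps hmeas c0 c1 v R)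
  have hf : Measurable fun ω => ((clusterSpan (mma1 c0 c1 (ξ · ω)) v R : ℤ) : ℝ) ^ γ :=
    (Measurable.of_discrete (f := fun z : ℤ => (z : ℝ) ^ γ)).comp
      (measurable_clusterSpan (measurable_mma1 hmeas) v R)
  have hPB : P.real B = P.real {ω | v < min c0 c1 * ξ 0 ω} :=
    measureReal_preimage_eq_preimage_zero hmeas hident _ (measurableSet_lt_const_mul v _)
  rw [← hPB]
  calc _ ≤ (2 * R) ^ γ * P.real (S \ (B \ D)) :=
        abs_setIntegral_sub_measureReal_le hS hE Set.sdiff_subset hBS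
          hf.aestronglyMeasurable hfE hfS hM
    _ ≤ (2 * R) ^ γ * (36 * R ^ 2 * P.real {ω | v < mma1 c0 c1 (ξ · ω) 0} ^ 2) := by
        gcongr
        exact (measureReal_mono hSE).trans (measureReal_twoBigJumps_le hmeas hindep hident hR)
    _ = 36 * 2 ^ γ * (R : ℝ) ^ (γ + 2) * P.real {ω | v < mma1 c0 c1 (ξ · ω) 0} ^ 2 := by
        rw [Real.mul_rpow zero_le_two (Nat.cast_nonneg R), Real.rpow_add (by positivity),
          Real.rpow_two]
        ring

end MMA1

lemma tendsto_div_add_sub_mul {F a b d : ℕ → ℝ} {A B D : ℝ} (hF : ∀ n, F n ≠ 0)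
    (ha : Tendsto (fun n => a n / F n) atTop (𝓝 A))
    (hb : Tendsto (fun n => b n / F n) atTop (𝓝 B))
    (hd : Tendsto (fun n => d n / F n) atTop (𝓝 D)) (hb0 : Tendsto b atTop (𝓝 0))
    (hAB : A + B ≠ 0) :
    Tendsto (fun n => d n / (a n + b n - a n * b n)) atTop (𝓝 (D / (A + B))) := by
  have hquot : ∀ n, d n / (a n + b n - a n * b n)
      = (d n / F n) / (a n / F n + b n / F n - a n / F n * b n) := fun n => by
    rw [← div_div_div_cancel_right₀ (hF n)]
    congr 1
    field_simp
  simp_rw [hquot]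
  have h := hd.div ((ha.add hb).sub (ha.mul hb0)) (by simpa using hAB)
  rw [mul_zero, sub_zero] at h
  exact h

lemma abs_one_div_mul_sub_div_le {w x y C : ℝ} (hw : 0 ≤ w) (hC : 0 ≤ C)
    (h : |x - y| ≤ C * w ^ 2) : |1 / w * x - y / w| ≤ C * w := by
  rw [one_div_mul_eq_div, ← sub_div, abs_div, abs_of_nonneg hw]
  exact div_le_of_le_mul₀ hw (by positivity) (by linarith)

section RegularVariation

variable {Ω : Type*} [MeasurableSpace Ω] {P : Measure Ω} {α : ℝ}

lemma tendsto_measureReal_lt_mul_div {η : Ω → ℝ}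
    (hRV : ∀ t : ℝ, 0 < t →
      Tendsto (fun x : ℝ => (P {ω | η ω > t * x}).toReal / (P {ω | η ω > x}).toReal)
        atTop (𝓝 (t ^ (-α))))
    {u : ℕ → ℝ} (hu : Tendsto u atTop atTop) {c : ℝ} (hc : 0 < c) :
    Tendsto (fun n => P.real {ω | u n < c * η ω} / P.real {ω | η ω > u n}) atTop
      (𝓝 (c ^ α)) := by
  have hset : ∀ x, {ω | η ω > c⁻¹ * x} = {ω | x < c * η ω} := fun x => by
    ext ω
    simp [inv_mul_lt_iff₀ hc]
  have hpow : c⁻¹ ^ (-α) = c ^ α := by rw [Real.inv_rpow hc.le, Real.rpow_neg hc.le, inv_inv]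
  have h := (hRV c⁻¹ (inv_pos.2 hc)).comp hu
  rw [hpow] at h
  exact h.congr fun n => by simp only [Function.comp, hset, measureReal_def]

theorem tendsto_measureReal_lt_min_mul_div [IsProbabilityMeasure P] {ξ : ℤ → Ω → ℝ}
    (hmeas : ∀ j, Measurable (ξ j)) (hindep : iIndepFun ξ P)
    (hident : ∀ j, Measure.map (ξ j) P = Measure.map (ξ 0) P)
    (hpos : ∀ x : ℝ, 0 < P {ω | ξ 0 ω > x})
    (hRV : ∀ t : ℝ, 0 < t →
      Tendsto (fun x : ℝ => (P {ω | ξ 0 ω > t * x}).toReal / (P {ω | ξ 0 ω > x}).toReal)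
        atTop (𝓝 (t ^ (-α))))
    {c0 c1 : ℝ} (hc0 : 0 < c0) (hc1 : 0 < c1) {u : ℕ → ℝ} (hu : Tendsto u atTop atTop)
    (hw0 : Tendsto (fun n => P.real {ω | u n < mma1 c0 c1 (ξ · ω) 0}) atTop (𝓝 0)) :
    Tendsto (fun n => P.real {ω | u n < min c0 c1 * ξ 0 ω} /
        P.real {ω | u n < mma1 c0 c1 (ξ · ω) 0}) atTop
      (𝓝 (min c0 c1 ^ α / (c0 ^ α + c1 ^ α))) := by
  simp_rw [measureReal_lt_mma1 hmeas hindep hident]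
  refine tendsto_div_add_sub_mul
    (fun n => (ENNReal.toReal_pos (hpos _).ne' (measure_ne_top _ _)).ne')
    (tendsto_measureReal_lt_mul_div hRV hu hc0) (tendsto_measureReal_lt_mul_div hRV hu hc1)
    (tendsto_measureReal_lt_mul_div hRV hu (lt_min hc0 hc1)) ?_ (by positivity)
  exact squeeze_zero (fun n => measureReal_nonneg)
    (fun n => (measureReal_lt_mul_le_measureReal_lt_mma1 hmeas hident).2) hw0

end RegularVariation

theorem stmt_4_general
    {Ω : Type*} [MeasurableSpace Ω] (P : Measure Ω) [IsProbabilityMeasure P]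
    (ξ : ℤ → Ω → ℝ) (hmeas : ∀ j, Measurable (ξ j))
    (hindep : iIndepFun ξ P)
    (hident : ∀ j, Measure.map (ξ j) P = Measure.map (ξ 0) P)
    (hnonneg : ∀ j ω, 0 ≤ ξ j ω)
    (hpos : ∀ x : ℝ, 0 < P {ω | ξ 0 ω > x})
    (α : ℝ)
    (hRV : ∀ t : ℝ, 0 < t →
      Tendsto (fun x : ℝ => (P {ω | ξ 0 ω > t * x}).toReal / (P {ω | ξ 0 ω > x}).toReal)
        atTop (nhds (t ^ (-α))))
    (c0 c1 : ℝ) (hc0 : 0 < c0) (hc1 : 0 < c1)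
    (X : ℤ → Ω → ℝ) (hX : ∀ j ω, X j ω = max (c0 * ξ j ω) (c1 * ξ (j + 1) ω))
    (u : ℕ → ℝ) (hu : Tendsto u atTop atTop)
    (w : ℕ → ℝ) (hw : ∀ n, w n = (P {ω | X 0 ω > u n}).toReal)
    (r : ℕ → ℕ) (hrpos : ∀ n, 0 < r n)
    (hrw : Tendsto (fun n => (r n : ℝ) * w n) atTop (nhds 0))
    (A : ℕ → ℤ → Set Ω)
    (hA : ∀ n (j : ℤ), A n j =
      {ω | ∃ i : ℤ, (j - 1) * (r n : ℤ) + 1 ≤ i ∧ i ≤ j * (r n : ℤ) ∧ X i ω > u n})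
    (tfirst tlast : ℕ → ℤ → Ω → ℤ)
    (htfirst : ∀ n (j : ℤ) ω, tfirst n j ω =
      sInf {i : ℤ | (j - 1) * (r n : ℤ) + 1 ≤ i ∧ i ≤ j * (r n : ℤ) ∧ X i ω > u n})
    (htlast : ∀ n (j : ℤ) ω, tlast n j ω =
      sSup {i : ℤ | (j - 1) * (r n : ℤ) + 1 ≤ i ∧ i ≤ j * (r n : ℤ) ∧ X i ω > u n})
    (γ : ℝ) (hγ : 0 ≤ γ)
    (hsmall : Tendsto (fun n => (r n : ℝ) ^ (γ + 2) * w n) atTop (nhds 0)) :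
    Tendsto (fun n => (1 / w n) *
        ∫ ω in (A n 1 ∩ A n 2), ((tlast n 2 ω - tfirst n 1 ω : ℤ) : ℝ) ^ γ ∂P)
      atTop (nhds ((min c0 c1) ^ α / (c0 ^ α + c1 ^ α))) := by
  obtain rfl : X = fun j ω => mma1 c0 c1 (ξ · ω) j := funext₂ hX
  obtain rfl : w = fun n => P.real {ω | u n < mma1 c0 c1 (ξ · ω) 0} := funext hw
  have hw0 : Tendsto (fun n => P.real {ω | u n < mma1 c0 c1 (ξ · ω) 0}) atTop (𝓝 0) :=
    squeeze_zero (fun n => measureReal_nonneg)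
      (fun n => le_mul_of_one_le_left measureReal_nonneg (Nat.one_le_cast.2 (hrpos n))) hrw
  have herr : ∀ n, |1 / P.real {ω | u n < mma1 c0 c1 (ξ · ω) 0} *
      ∫ ω in (A n 1 ∩ A n 2), ((tlast n 2 ω - tfirst n 1 ω : ℤ) : ℝ) ^ γ ∂P -
        P.real {ω | u n < min c0 c1 * ξ 0 ω} / P.real {ω | u n < mma1 c0 c1 (ξ · ω) 0}| ≤
      36 * 2 ^ γ * (r n : ℝ) ^ (γ + 2) * P.real {ω | u n < mma1 c0 c1 (ξ · ω) 0} := by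
    intro n
    have hblocks : A n 1 ∩ A n 2 =
        {ω | (exceedances (mma1 c0 c1 (ξ · ω)) (u n) 1 (r n)).Nonempty} ∩
          {ω | (exceedances (mma1 c0 c1 (ξ · ω)) (u n) (r n + 1) (2 * r n)).Nonempty} := by
      rw [hA, hA]
      norm_num
      rfl
    have hspan : ∀ ω, tlast n 2 ω - tfirst n 1 ω =
        clusterSpan (mma1 c0 c1 (ξ · ω)) (u n) (r n) := fun ω => by
      rw [htfirst, htlast]
      norm_num
      rfl
    simp only [hblocks, hspan]
    exact abs_one_div_mul_sub_div_le measureReal_nonneg (by positivity)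
      (abs_setIntegral_clusterSpan_sub_le hmeas hindep hident hnonneg hγ (hrpos n))
  have hbound0 := (hsmall.const_mul (36 * 2 ^ γ)).congr fun n => (mul_assoc _ _ _).symm
  rw [mul_zero] at hbound0
  have herr0 := squeeze_zero_norm (fun n => (Real.norm_eq_abs _).trans_le (herr n)) hbound0
  simpa using (tendsto_measureReal_lt_min_mul_div hmeas hindep hident hpos hRV hc0 hc1 hu
    hw0).add herr0

/-- Joint cluster length over two adjacent blocks, MMA(1), small blocks:
if `r_n^{γ+2} w_n → 0`, then
`lim (1/w_n) E[(t₂ᶫᵃˢᵗ − t₁ᶠⁱʳˢᵗ)^γ 1_{A₁∩A₂}] = (min c₀ c₁)^α / (c₀^α + c₁^α)`. -/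
theorem stmt_4
    {Ω : Type*} [MeasurableSpace Ω] (P : Measure Ω) [IsProbabilityMeasure P]
    (ξ : ℤ → Ω → ℝ) (hmeas : ∀ j, Measurable (ξ j))
    (hindep : iIndepFun ξ P)
    (hident : ∀ j, Measure.map (ξ j) P = Measure.map (ξ 0) P)
    (hnonneg : ∀ j ω, 0 ≤ ξ j ω)
    (hpos : ∀ x : ℝ, 0 < P {ω | ξ 0 ω > x})
    (α : ℝ) (hα : 0 < α)
    (hRV : ∀ t : ℝ, 0 < t →
      Tendsto (fun x : ℝ => (P {ω | ξ 0 ω > t * x}).toReal / (P {ω | ξ 0 ω > x}).toReal)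
        atTop (nhds (t ^ (-α))))
    (c0 c1 : ℝ) (hc0 : 0 < c0) (hc1 : 0 < c1)
    (X : ℤ → Ω → ℝ) (hX : ∀ j ω, X j ω = max (c0 * ξ j ω) (c1 * ξ (j + 1) ω))
    (u : ℕ → ℝ) (hu : Tendsto u atTop atTop)
    (w : ℕ → ℝ) (hw : ∀ n, w n = (P {ω | X 0 ω > u n}).toReal)
    (r : ℕ → ℕ) (hrpos : ∀ n, 0 < r n)
    (hr : Tendsto (fun n => (r n : ℝ)) atTop atTop)
    (hrw : Tendsto (fun n => (r n : ℝ) * w n) atTop (nhds 0))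
    (A : ℕ → ℤ → Set Ω)
    (hA : ∀ n (j : ℤ), A n j =
      {ω | ∃ i : ℤ, (j - 1) * (r n : ℤ) + 1 ≤ i ∧ i ≤ j * (r n : ℤ) ∧ X i ω > u n})
    (tfirst tlast : ℕ → ℤ → Ω → ℤ)
    (htfirst : ∀ n (j : ℤ) ω, tfirst n j ω =
      sInf {i : ℤ | (j - 1) * (r n : ℤ) + 1 ≤ i ∧ i ≤ j * (r n : ℤ) ∧ X i ω > u n})
    (htlast : ∀ n (j : ℤ) ω, tlast n j ω =
      sSup {i : ℤ | (j - 1) * (r n : ℤ) + 1 ≤ i ∧ i ≤ j * (r n : ℤ) ∧ X i ω > u n})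
    (γ : ℝ) (hγ : 0 ≤ γ)
    (hsmall : Tendsto (fun n => (r n : ℝ) ^ (γ + 2) * w n) atTop (nhds 0)) :
    Tendsto (fun n => (1 / w n) *
        ∫ ω in (A n 1 ∩ A n 2), ((tlast n 2 ω - tfirst n 1 ω : ℤ) : ℝ) ^ γ ∂P)
      atTop (nhds ((min c0 c1) ^ α / (c0 ^ α + c1 ^ α))) :=
  stmt_4_general P ξ hmeas hindep hident hnonneg hpos α hRV c0 c1 hc0 hc1 X hX u hu w hw r hrpos hrw
    A hA tfirst tlast htfirst htlast γ hγ hsmall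
end
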